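/- arXiv:2409.01224 — 6 statements merged into one kernel-verified Lean document; each statement's English description precedes it below -/
import Mathlib

section
/- Let A, B ∈ ℤ[x] be coprime in ℚ[x], with resultant Δ, and let G(n) = gcd(A(n), B(n)). For every prime p, the sequence n ↦ gcd(G(n), p^∞) (the largest power of p dividing G(n)) is periodic with period dividing p^(ν_p(Δ)), where ν_p(Δ) is the p-adic valuation of Δ. -/
open Polynomial

/-- The Sylvester matrix of two integer polynomials `A` and `B`, of size
`(d+e) × (d+e)` where `d = deg A`, `e = deg B`: the first `e` columns carry the
(shifted) coefficients of `A`, the last `d` columns those of `B`. -/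
noncomputable def sylvesterMatrix (A B : Polynomial ℤ) :
    Matrix (Fin (A.natDegree + B.natDegree)) (Fin (A.natDegree + B.natDegree)) ℤ :=
  Matrix.of fun i j =>
    if (j : ℕ) < B.natDegree then
      if (j : ℕ) ≤ (i : ℕ) ∧ (i : ℕ) ≤ (j : ℕ) + A.natDegree then
        A.coeff (A.natDegree + (j : ℕ) - (i : ℕ)) else 0
    else
      if (j : ℕ) - B.natDegree ≤ (i : ℕ) ∧ (i : ℕ) ≤ (j : ℕ) then
        B.coeff ((j : ℕ) - (i : ℕ)) else 0

/-- The resultant of two integer polynomials, as the determinant of their Sylvester matrix. -/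
noncomputable def resultant (A B : Polynomial ℤ) : ℤ := (sylvesterMatrix A B).det

/-!
Mathlib's Bézout relation for the resultant, `u A + v B = Δ` with `u, v ∈ ℤ[X]`, shows that
`G(n)` divides `Δ`, which is nonzero by coprimality over `ℚ`; so `ν_p(G(n)) ≤ ν_p(Δ) =: k`.
Since `x - y ∣ P(x) - P(y)`, a power `p ^ a` with `a ≤ k` dividing `A(n)` and `B(n)` also
divides `A(n + p ^ k)` and `B(n + p ^ k)`; applied in both directions this gives
`ν_p(G(n)) = ν_p(G(n + p ^ k))`.
-/

theorem sylvesterMatrix_submatrix_rev (A B : ℤ[X]) :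
    (sylvesterMatrix A B).submatrix Fin.rev Fin.rev =
      Polynomial.sylvester A B A.natDegree B.natDegree := by
  ext i j
  induction j using Fin.addCases with
  | left j =>
    simp only [Matrix.submatrix_apply, sylvesterMatrix, Polynomial.sylvester, Matrix.of_apply,
      Fin.addCases_left, Fin.val_rev, Fin.val_castAdd, Set.mem_Icc]
    split_ifs <;> first | omega | (congr 1; omega)
  | right j =>
    simp only [Matrix.submatrix_apply, sylvesterMatrix, Polynomial.sylvester, Matrix.of_apply,
      Fin.addCases_right, Fin.val_rev, Fin.val_natAdd, Set.mem_Icc]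
    split_ifs <;> first | omega | (congr 1; omega)

theorem resultant_eq_polynomial_resultant (A B : ℤ[X]) :
    _root_.resultant A B = Polynomial.resultant A B := by
  rw [Polynomial.resultant, ← sylvesterMatrix_submatrix_rev, _root_.resultant]
  exact (Matrix.det_submatrix_equiv_self Fin.revPerm _).symm

namespace Polynomial

variable {R : Type*} [CommRing R]

theorem dvd_eval_of_dvd_sub {f : R[X]} {c x y : R} (hx : c ∣ f.eval x) (hxy : c ∣ y - x) :
    c ∣ f.eval y := by
  simpa using dvd_add (hxy.trans (sub_dvd_eval_sub y x f)) hx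

theorem dvd_resultant_of_dvd_eval {f g : R[X]} (hfg : f.natDegree ≠ 0 ∨ g.natDegree ≠ 0)
    {c x : R} (hf : c ∣ f.eval x) (hg : c ∣ g.eval x) : c ∣ resultant f g := by
  obtain ⟨u, v, -, -, huv⟩ := exists_mul_add_mul_eq_C_resultant f g le_rfl le_rfl hfg
  have := congrArg (eval x) huv
  rw [eval_add, eval_mul, eval_mul, eval_C] at this
  exact this ▸ dvd_add (hf.mul_right _) (hg.mul_right _)

theorem resultant_ne_zero_of_isCoprime_map {K : Type*} [Field K] {φ : R →+* K}
    (hφ : Function.Injective φ) {f g : R[X]} (h : IsCoprime (f.map φ) (g.map φ)) :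
    resultant f g ≠ 0 := by
  have := resultant_ne_zero _ _ h
  rwa [natDegree_map_eq_of_injective hφ, natDegree_map_eq_of_injective hφ, resultant_map_map,
    map_ne_zero_iff _ hφ] at this

end Polynomial

theorem padicValNat_gcd_eval_le_of_dvd_sub (A B : ℤ[X]) {p k : ℕ} (hp : p ≠ 1) {x y : ℤ}
    (hk : padicValNat p (Int.gcd (A.eval x) (B.eval x)) ≤ k)
    (hy : Int.gcd (A.eval y) (B.eval y) ≠ 0) (hxy : (p : ℤ) ^ k ∣ y - x) :
    padicValNat p (Int.gcd (A.eval x) (B.eval x)) ≤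
      padicValNat p (Int.gcd (A.eval y) (B.eval y)) := by
  set a := padicValNat p (Int.gcd (A.eval x) (B.eval x))
  have hpa : (p : ℤ) ^ a ∣ Int.gcd (A.eval x) (B.eval x) := by
    exact_mod_cast pow_padicValNat_dvd
  have hsub : (p : ℤ) ^ a ∣ y - x := (pow_dvd_pow _ hk).trans hxy
  have hA := dvd_eval_of_dvd_sub (hpa.trans (Int.gcd_dvd_left _ _)) hsub
  have hB := dvd_eval_of_dvd_sub (hpa.trans (Int.gcd_dvd_right _ _)) hsub
  rw [← padicValNat_dvd_iff_le_of_ne_one hp hy, ← Int.natCast_dvd_natCast]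
  exact_mod_cast Int.dvd_coe_gcd hA hB

theorem gcd_pow_part_periodic (A B : Polynomial ℤ)
    (hcop : IsCoprime (A.map (Int.castRingHom ℚ)) (B.map (Int.castRingHom ℚ)))
    (p : ℕ) (hp : p.Prime) :
    Function.Periodic
      (fun n : ℤ => (p : ℕ) ^ padicValNat p (Int.gcd (A.eval n) (B.eval n)))
      ((p : ℤ) ^ padicValInt p (_root_.resultant A B)) := by
  by_cases hconst : A.natDegree = 0 ∧ B.natDegree = 0
  · -- Here `Δ = 1`, which `G(n)` need not divide; but `G` is constant.
    intro n
    rw [eq_C_of_natDegree_eq_zero hconst.1, eq_C_of_natDegree_eq_zero hconst.2]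
    simp only [eval_C]
  have hdeg := not_and_or.1 hconst
  rw [resultant_eq_polynomial_resultant]
  have hΔ : (A.resultant B).natAbs ≠ 0 :=
    Int.natAbs_ne_zero.2 (resultant_ne_zero_of_isCoprime_map Int.cast_injective hcop)
  have hG n : Int.gcd (A.eval n) (B.eval n) ∣ (A.resultant B).natAbs :=
    Int.natCast_dvd.1 <|
      dvd_resultant_of_dvd_eval hdeg (Int.gcd_dvd_left _ _) (Int.gcd_dvd_right _ _)
  have hG0 n : Int.gcd (A.eval n) (B.eval n) ≠ 0 := ne_zero_of_dvd_ne_zero hΔ (hG n)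
  have hle n : padicValNat p (Int.gcd (A.eval n) (B.eval n)) ≤ padicValInt p (A.resultant B) :=
    (padicValNat_dvd_iff_le_of_ne_one hp.ne_one hΔ).1 (pow_padicValNat_dvd.trans (hG n))
  intro n
  refine congrArg (p ^ ·) (le_antisymm ?_ ?_)
  · exact padicValNat_gcd_eval_le_of_dvd_sub A B hp.ne_one (hle _) (hG0 n) ⟨-1, by ring⟩
  · exact padicValNat_gcd_eval_le_of_dvd_sub A B hp.ne_one (hle n) (hG0 _) ⟨1, by ring⟩
end

section
/- Let A, B ∈ ℤ[x] be coprime in ℚ[x] with resultant Δ and G(n) = gcd(A(n), B(n)). Given finitely many primes p_1, ..., p_ℓ dividing Δ and integers n_1, ..., n_ℓ, there exists an integer n such that for every i, the largest power of p_i dividing G(n) equals the largest power of p_i dividing G(n_i). -/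
/-!
Each valuation `ν_{p_i}(G(N_i))` is finite because `A` and `B` have no common root, and it only
depends on `A(n), B(n)` modulo `p_i ^ (ν_{p_i}(G(N_i)) + 1)`. Since `A(n) ≡ A(N_i)` whenever
`n ≡ N_i` modulo that power, the Chinese remainder theorem produces a single `n` realizing all
the prescribed valuations at once.
-/

open Polynomial

theorem exists_forall_dvd_sub_of_pairwise_isCoprime {R ι : Type*} [CommRing R] [Finite ι]
    {m : ι → R} (hm : Pairwise fun i j => IsCoprime (m i) (m j)) (x : ι → R) :
    ∃ r, ∀ i, m i ∣ r - x i := by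
  have hI : Pairwise fun i j => IsCoprime (Ideal.span {m i}) (Ideal.span {m j}) :=
    fun i j hij => (Ideal.isCoprime_span_singleton_iff _ _).2 (hm hij)
  simpa only [Ideal.mem_span_singleton] using Ideal.exists_forall_sub_mem_ideal hI x

theorem Polynomial.isCoprime_eval_of_isCoprime_map {R S : Type*} [CommRing R] [CommRing S]
    (f : R →+* S) {A B : R[X]} (h : IsCoprime (A.map f) (B.map f)) (r : R) :
    IsCoprime (f (A.eval r)) (f (B.eval r)) := by
  simpa only [coe_evalRingHom, eval_map, eval₂_at_apply] using h.map (evalRingHom (f r))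

theorem Polynomial.gcd_eval_ne_zero_of_isCoprime_map {A B : ℤ[X]}
    (h : IsCoprime (A.map (Int.castRingHom ℚ)) (B.map (Int.castRingHom ℚ))) (m : ℤ) :
    Int.gcd (A.eval m) (B.eval m) ≠ 0 := by
  rw [Ne, Int.gcd_eq_zero_iff]
  rintro ⟨hA, hB⟩
  have := isCoprime_eval_of_isCoprime_map _ h m
  rw [hA, hB, map_zero] at this
  exact not_isCoprime_zero_zero this

theorem Int.dvd_gcd_iff_of_dvd_sub {m e a b c d : ℤ} (hac : m ∣ a - c) (hbd : m ∣ b - d)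
    (he : e ∣ m) : e ∣ (Int.gcd a b : ℤ) ↔ e ∣ (Int.gcd c d : ℤ) := by
  rw [Int.dvd_coe_gcd_iff, Int.dvd_coe_gcd_iff, dvd_iff_dvd_of_dvd_sub (he.trans hac),
    dvd_iff_dvd_of_dvd_sub (he.trans hbd)]

theorem padicValNat_eq_of_pow_dvd_iff {p k g g' : ℕ} [Fact p.Prime] (hg' : g' ≠ 0)
    (hk : padicValNat p g' ≤ k) (h : ∀ j ≤ k + 1, p ^ j ∣ g ↔ p ^ j ∣ g') :
    padicValNat p g = padicValNat p g' := by
  have hdvd : p ^ padicValNat p g' ∣ g := (h _ (by omega)).2 pow_padicValNat_dvd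
  have hndvd : ¬ p ^ (padicValNat p g' + 1) ∣ g := fun hd =>
    pow_succ_padicValNat_not_dvd hg' ((h _ (by omega)).1 hd)
  have hg : g ≠ 0 := by
    rintro rfl
    exact hndvd (dvd_zero _)
  rw [padicValNat_dvd_iff_le hg] at hdvd hndvd
  omega

theorem padicValNat_gcd_eq_of_dvd_sub {p k : ℕ} [Fact p.Prime] {a b c d : ℤ}
    (hac : (p : ℤ) ^ (k + 1) ∣ a - c) (hbd : (p : ℤ) ^ (k + 1) ∣ b - d)
    (hcd : Int.gcd c d ≠ 0) (hk : padicValNat p (Int.gcd c d) ≤ k) :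
    padicValNat p (Int.gcd a b) = padicValNat p (Int.gcd c d) := by
  refine padicValNat_eq_of_pow_dvd_iff hcd hk fun j hj => ?_
  exact_mod_cast Int.dvd_gcd_iff_of_dvd_sub hac hbd (pow_dvd_pow (p : ℤ) hj)

theorem patterns_realized_general (A B : Polynomial ℤ)
    (hcop : IsCoprime (A.map (Int.castRingHom ℚ)) (B.map (Int.castRingHom ℚ)))
    (ℓ : ℕ) (p : Fin ℓ → ℕ) (hp : ∀ i, (p i).Prime)
    (hdist : Function.Injective p)
    (N : Fin ℓ → ℤ) :
    ∃ n : ℤ, ∀ i,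
      (p i) ^ padicValNat (p i) (Int.gcd (A.eval n) (B.eval n)) =
      (p i) ^ padicValNat (p i) (Int.gcd (A.eval (N i)) (B.eval (N i))) := by
  set v : Fin ℓ → ℕ := fun i => padicValNat (p i) (Int.gcd (A.eval (N i)) (B.eval (N i)))
  have hcoprime : Pairwise fun i j => IsCoprime ((p i : ℤ) ^ (v i + 1)) ((p j : ℤ) ^ (v j + 1)) :=
    fun i j hij =>
      (Nat.isCoprime_iff_coprime.2 ((Nat.coprime_primes (hp i) (hp j)).2 (hdist.ne hij))).pow
  obtain ⟨n, hn⟩ := exists_forall_dvd_sub_of_pairwise_isCoprime hcoprime N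
  refine ⟨n, fun i => congrArg _ ?_⟩
  have : Fact (p i).Prime := ⟨hp i⟩
  exact padicValNat_gcd_eq_of_dvd_sub ((hn i).trans (sub_dvd_eval_sub _ _ A))
    ((hn i).trans (sub_dvd_eval_sub _ _ B)) (gcd_eval_ne_zero_of_isCoprime_map hcop _) le_rfl

theorem patterns_realized (A B : Polynomial ℤ)
    (hcop : IsCoprime (A.map (Int.castRingHom ℚ)) (B.map (Int.castRingHom ℚ)))
    (ℓ : ℕ) (p : Fin ℓ → ℕ) (hp : ∀ i, (p i).Prime)
    (hdist : Function.Injective p)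
    (hdvd : ∀ i, (p i : ℤ) ∣ _root_.resultant A B)
    (N : Fin ℓ → ℤ) :
    ∃ n : ℤ, ∀ i,
      (p i) ^ padicValNat (p i) (Int.gcd (A.eval n) (B.eval n)) =
      (p i) ^ padicValNat (p i) (Int.gcd (A.eval (N i)) (B.eval (N i))) :=
  patterns_realized_general A B hcop ℓ p hp hdist N
end

section
/- Let A, B ∈ ℤ[x] be coprime monic polynomials of degrees d and e, with resultant Δ, and let G(n) = gcd(A(n), B(n)). If integers q_1, ..., q_ℓ with ℓ ≤ d + e satisfy q_i ∣ G(n_i) for integers n_1, ..., n_ℓ, then the product q_1 q_2 ⋯ q_ℓ divides Δ · ∏_{1 ≤ i < j ≤ ℓ} (n_j − n_i). -/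
open Polynomial

/-!
Column `j` of the Sylvester matrix `S` holds the coefficients, leading one first, of a polynomial
`X^k A` or `X^k B` of degree `< d + e`. Hence the row vector `(x^(d+e-1), …, x, 1)` times `S`
lists the values of these polynomials at `x`, and for `x = n_i` all of them are divisible
by `q_i`. Stack the `ℓ` rows for `x = n_1, …, n_ℓ` and complete them by unit vectors to a square
matrix `V`; in suitable coordinates `V` is block triangular with an identity block, so `det V` is
the Vandermonde determinant of the `n_i`. Every row of `V S` is divisible by the corresponding
`q_i` (or by `1`), so `∏ q_i ∣ det (V S) = det V · Δ`.
-/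

namespace Matrix

variable {R ι κ μ : Type*} [CommRing R] [Fintype ι] [DecidableEq ι]
  [Fintype κ] [DecidableEq κ] [Fintype μ] [DecidableEq μ]

theorem prod_dvd_det_of_forall_dvd (M : Matrix ι ι R) (g : ι → R) (h : ∀ i j, g i ∣ M i j) :
    ∏ i, g i ∣ M.det := by
  rw [det_apply]
  refine Finset.dvd_sum fun σ _ => ?_
  rw [Units.smul_def, zsmul_eq_mul, ← Equiv.prod_comp σ g]
  exact (Finset.prod_dvd_prod_of_dvd _ _ fun i _ => h (σ i) i).mul_left _

theorem prod_dvd_det_toCols₁_mul_det (P : Matrix κ (κ ⊕ μ) R) (S : Matrix (κ ⊕ μ) (κ ⊕ μ) R)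
    (q : κ → R) (h : ∀ i j, q i ∣ (P * S) i j) :
    ∏ i, q i ∣ P.toCols₁.det * S.det := by
  have hdet : (fromRows P (fromCols (0 : Matrix μ κ R) 1)).det = P.toCols₁.det := by
    rw [← fromCols_toCols P, fromRows_fromCols_eq_fromBlocks, det_fromBlocks_zero₂₁, det_one,
      mul_one, toCols₁_fromCols]
  rw [← hdet, ← det_mul _ S, fromRows_mul]
  have hprod : ∏ i, q i = ∏ i, (Sum.elim q 1 : κ ⊕ μ → R) i := by simp [Fintype.prod_sum_type]
  rw [hprod]
  refine prod_dvd_det_of_forall_dvd _ _ ?_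
  rintro (i | i) j
  · exact h i j
  · exact one_dvd _

theorem prod_dvd_det_submatrix_mul_det (e : κ ⊕ μ ≃ ι) (P : Matrix κ ι R) (S : Matrix ι ι R)
    (q : κ → R) (h : ∀ i j, q i ∣ (P * S) i j) :
    ∏ i, q i ∣ (P.submatrix id (e ∘ Sum.inl)).det * S.det := by
  rw [← det_submatrix_equiv_self e S]
  refine prod_dvd_det_toCols₁_mul_det (P.submatrix id e) _ q fun i j => ?_
  rw [submatrix_mul_equiv]
  exact h i (e j)

end Matrix

theorem Polynomial.sum_fin_pow_mul_coeff_rev {R : Type*} [CommSemiring R] {p : R[X]} {N : ℕ}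
    (hp : p.natDegree < N) (x : R) :
    ∑ k : Fin N, x ^ (N - 1 - k) * p.coeff (N - 1 - k) = p.eval x := by
  rw [eval_eq_sum_range' hp, ← Fin.sum_univ_eq_sum_range, ← Equiv.sum_comp Fin.revPerm]
  refine Fintype.sum_congr _ _ fun k => ?_
  rw [Fin.revPerm_apply, Fin.val_rev, mul_comm]
  congr 3 <;> omega

noncomputable def sylvesterColumn (A B : ℤ[X]) (j : ℕ) : ℤ[X] :=
  if j < B.natDegree then X ^ (B.natDegree - 1 - j) * A
  else X ^ (A.natDegree + B.natDegree - 1 - j) * B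

section Sylvester

variable (A B : ℤ[X])

theorem sylvesterMatrix_apply_eq_coeff (i j : Fin (A.natDegree + B.natDegree)) :
    sylvesterMatrix A B i j =
      (sylvesterColumn A B j).coeff (A.natDegree + B.natDegree - 1 - i) := by
  have hi := i.isLt
  have hj := j.isLt
  simp only [sylvesterMatrix, sylvesterColumn, Matrix.of_apply]
  split_ifs <;> rw [coeff_X_pow_mul'] <;> split_ifs <;>
    first
    | rfl
    | (congr 1; omega)
    | omega
    | exact (coeff_eq_zero_of_natDegree_lt (by omega)).symm

theorem natDegree_sylvesterColumn_lt {j : ℕ} (hj : j < A.natDegree + B.natDegree) :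
    (sylvesterColumn A B j).natDegree < A.natDegree + B.natDegree := by
  unfold sylvesterColumn
  split_ifs with h
  all_goals
    refine natDegree_mul_le.trans_lt ?_
    rw [natDegree_X_pow]
    omega

theorem sum_pow_mul_sylvesterMatrix (x : ℤ) (j : Fin (A.natDegree + B.natDegree)) :
    ∑ k : Fin _, x ^ (A.natDegree + B.natDegree - 1 - (k : ℕ)) * sylvesterMatrix A B k j =
      (sylvesterColumn A B j).eval x := by
  simp_rw [sylvesterMatrix_apply_eq_coeff]
  exact sum_fin_pow_mul_coeff_rev (natDegree_sylvesterColumn_lt A B j.isLt) x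

theorem dvd_eval_sylvesterColumn {c x : ℤ} (hA : c ∣ A.eval x) (hB : c ∣ B.eval x) (j : ℕ) :
    c ∣ (sylvesterColumn A B j).eval x := by
  unfold sylvesterColumn
  split_ifs
  · simpa using hA.mul_left _
  · simpa using hB.mul_left _

end Sylvester

theorem prod_dvd_resultant_mul_vandermonde_general (A B : Polynomial ℤ)
    (ℓ : ℕ) (hℓ : ℓ ≤ A.natDegree + B.natDegree)
    (q : Fin ℓ → ℤ) (n : Fin ℓ → ℤ)
    (hq : ∀ i, q i ∣ (Int.gcd (A.eval (n i)) (B.eval (n i)) : ℤ)) :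
    (∏ i, q i) ∣
      _root_.resultant A B * ∏ i, ∏ j ∈ Finset.univ.filter (fun j => i < j), (n j - n i) := by
  obtain ⟨m, hm⟩ := Nat.exists_eq_add_of_le hℓ
  set N := A.natDegree + B.natDegree
  -- `σ (inl b) = N - 1 - b`, so the columns `σ ∘ inl` carry the powers `0, …, ℓ - 1`
  let σ : Fin ℓ ⊕ Fin m ≃ Fin N := (finSumFinEquiv.trans (finCongr hm.symm)).trans Fin.revPerm
  let P : Matrix (Fin ℓ) (Fin N) ℤ := Matrix.of fun i k => n i ^ (N - 1 - (k : ℕ))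
  have hP : P.submatrix id (σ ∘ Sum.inl) = Matrix.vandermonde n := by
    ext i b
    simp only [P, σ, Matrix.submatrix_apply, Matrix.of_apply, Matrix.vandermonde_apply, id_eq,
      Equiv.coe_trans, Function.comp_apply, finSumFinEquiv_apply_left, finCongr_apply,
      Fin.revPerm_apply, Fin.val_rev, Fin.val_cast, Fin.val_castAdd]
    congr 1
    omega
  have hPS : ∀ i j, q i ∣ (P * sylvesterMatrix A B) i j := fun i j => by
    rw [Matrix.mul_apply]
    simp only [P, Matrix.of_apply]
    rw [sum_pow_mul_sylvesterMatrix]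
    exact dvd_eval_sylvesterColumn A B ((hq i).trans (Int.gcd_dvd_left _ _))
      ((hq i).trans (Int.gcd_dvd_right _ _)) j
  have key := Matrix.prod_dvd_det_submatrix_mul_det σ P (sylvesterMatrix A B) q hPS
  rw [hP, Matrix.det_vandermonde, mul_comm] at key
  simp only [Finset.filter_lt_eq_Ioi]
  exact key

theorem prod_dvd_resultant_mul_vandermonde (A B : Polynomial ℤ)
    (hA : A.Monic) (hB : B.Monic)
    (hcop : IsCoprime (A.map (Int.castRingHom ℚ)) (B.map (Int.castRingHom ℚ)))
    (ℓ : ℕ) (hℓ : ℓ ≤ A.natDegree + B.natDegree)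
    (q : Fin ℓ → ℤ) (n : Fin ℓ → ℤ)
    (hq : ∀ i, q i ∣ (Int.gcd (A.eval (n i)) (B.eval (n i)) : ℤ)) :
    (∏ i, q i) ∣
      _root_.resultant A B * ∏ i, ∏ j ∈ Finset.univ.filter (fun j => i < j), (n j - n i) :=
  prod_dvd_resultant_mul_vandermonde_general A B ℓ hℓ q n hq
end

section
/- Let p be a prime and suppose A(x) ≡ (x−r₁)⋯(x−r_d) and B(x) ≡ (x−s₁)⋯(x−s_e) mod p^ω, where the r_i are pairwise distinct mod p and the s_j are pairwise distinct mod p. If n is an integer with n ≡ r_i ≡ s_j (mod p) for some i, j, then gcd(A(n), B(n), p^ω) = gcd(n − r_i, r_i − s_j, p^ω). If no such pair (i,j) exists, then gcd(A(n), B(n), p^ω) = 1. -/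
open Polynomial

/-! Modulo `p ^ ω`, `A(n) ≡ ∏ (n - rᵢ)`. In `gcd(·, p ^ ω)` only the factors divisible by `p`
count, and since the `rᵢ` are distinct mod `p`, at most one factor `n - rᵢ` is; likewise for `B`.
As `gcd(·, p ^ ω)` can be pushed inside `gcd(A(n), B(n))`, the claim reduces to
`gcd(n - rᵢ, n - sⱼ) = gcd(n - rᵢ, rᵢ - sⱼ)`, or to `gcd(1, ·) = 1` when no factor is divisible. -/

open Finset

theorem Int.ModEq.gcd_eq {a b m : ℤ} (h : a ≡ b [ZMOD m]) : Int.gcd a m = Int.gcd b m := by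
  rw [← Int.gcd_emod, h, Int.gcd_emod]

theorem Int.gcd_gcd_congr {a a' b b' q : ℤ} (ha : Int.gcd a q = Int.gcd a' q)
    (hb : Int.gcd b q = Int.gcd b' q) :
    Int.gcd (Int.gcd a b) q = Int.gcd (Int.gcd a' b') q := by
  have swap : ∀ x y : ℤ, Int.gcd (Int.gcd x y) q = Int.gcd y (Int.gcd x q) := fun x y => by
    rw [Int.gcd_comm x, Int.gcd_assoc]
  rw [Int.gcd_assoc, hb, ← Int.gcd_assoc, swap, ha, ← swap]

theorem Int.gcd_prod_pow_eq_gcd_prod_filter_dvd {ι : Type*} (s : Finset ι) (x : ι → ℤ) {p : ℤ}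
    (hp : Prime p) (ω : ℕ) :
    Int.gcd (∏ k ∈ s, x k) (p ^ ω) = Int.gcd (∏ k ∈ s with p ∣ x k, x k) (p ^ ω) := by
  rw [← prod_filter_mul_prod_filter_not s (p ∣ x ·)]
  refine Int.gcd_mul_left_left_of_gcd_eq_one (Int.isCoprime_iff_gcd_eq_one.mp ?_)
  refine IsCoprime.pow_right (IsCoprime.prod_left fun k hk => ?_)
  exact ((hp.coprime_iff_not_dvd).mpr (mem_filter.mp hk).2).symm

theorem Polynomial.eval_modEq_prod_of_map_eq {ι : Type*} {m : ℕ} {A : ℤ[X]} {s : Finset ι}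
    {r : ι → ℤ} (hA : A.map (Int.castRingHom (ZMod m)) = ∏ i ∈ s, (X - C (r i : ZMod m)))
    (n : ℤ) : A.eval n ≡ ∏ i ∈ s, (n - r i) [ZMOD m] := by
  rw [← ZMod.intCast_eq_intCast_iff]
  have hevalA := congrArg (eval (n : ZMod m)) hA
  rw [eval_intCast_map, eval_prod] at hevalA
  simpa using hevalA

theorem Polynomial.gcd_eval_pow_eq_gcd_prod_filter_modEq {ι : Type*} {p ω : ℕ} (hp : p.Prime)
    {A : ℤ[X]} {s : Finset ι} {r : ι → ℤ}
    (hA : A.map (Int.castRingHom (ZMod (p ^ ω))) = ∏ i ∈ s, (X - C (r i : ZMod (p ^ ω))))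
    (n : ℤ) :
    Int.gcd (A.eval n) ((p : ℤ) ^ ω) =
      Int.gcd (∏ i ∈ s with r i ≡ n [ZMOD p], (n - r i)) ((p : ℤ) ^ ω) := by
  have hmod := eval_modEq_prod_of_map_eq hA n
  push_cast at hmod
  rw [hmod.gcd_eq, Int.gcd_prod_pow_eq_gcd_prod_filter_dvd _ _ (Nat.prime_iff_prime_int.mp hp)]
  simp only [Int.modEq_iff_dvd]

theorem Finset.filter_modEq_eq_singleton {ι : Type*} [DecidableEq ι] {s : Finset ι} {r : ι → ℤ}
    {m n : ℤ} (hr : ∀ i j, i ≠ j → ¬ r i ≡ r j [ZMOD m]) {i : ι} (hi : i ∈ s)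
    (hn : n ≡ r i [ZMOD m]) : {k ∈ s | r k ≡ n [ZMOD m]} = {i} := by
  ext k
  simp only [mem_filter, mem_singleton]
  constructor
  · rintro ⟨-, hk⟩
    by_contra hki
    exact hr k i hki (hk.trans hn)
  · rintro rfl
    exact ⟨hi, hn.symm⟩

theorem gcd_split_simple_roots (A B : Polynomial ℤ) (p : ℕ) (hp : p.Prime) (ω : ℕ)
    (d e : ℕ) (r : Fin d → ℤ) (s : Fin e → ℤ)
    (hrdist : ∀ i j, i ≠ j → ¬ (r i ≡ r j [ZMOD (p : ℤ)]))
    (hsdist : ∀ i j, i ≠ j → ¬ (s i ≡ s j [ZMOD (p : ℤ)]))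
    (hAfact : A.map (Int.castRingHom (ZMod (p ^ ω))) =
      ∏ i, (Polynomial.X - Polynomial.C ((r i : ZMod (p ^ ω)))))
    (hBfact : B.map (Int.castRingHom (ZMod (p ^ ω))) =
      ∏ j, (Polynomial.X - Polynomial.C ((s j : ZMod (p ^ ω)))))
    (n : ℤ) :
    (∀ i j, n ≡ r i [ZMOD (p : ℤ)] → n ≡ s j [ZMOD (p : ℤ)] →
      Int.gcd ((Int.gcd (A.eval n) (B.eval n) : ℤ)) ((p : ℤ) ^ ω) =
        Int.gcd ((Int.gcd (n - r i) (r i - s j) : ℤ)) ((p : ℤ) ^ ω)) ∧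
    ((¬ ∃ i j, n ≡ r i [ZMOD (p : ℤ)] ∧ n ≡ s j [ZMOD (p : ℤ)]) →
      Int.gcd ((Int.gcd (A.eval n) (B.eval n) : ℤ)) ((p : ℤ) ^ ω) = 1) := by
  have hAB := Int.gcd_gcd_congr (gcd_eval_pow_eq_gcd_prod_filter_modEq hp hAfact n)
    (gcd_eval_pow_eq_gcd_prod_filter_modEq hp hBfact n)
  refine ⟨fun i j hi hj => ?_, fun hne => ?_⟩
  · rw [hAB, filter_modEq_eq_singleton hrdist (mem_univ i) hi,
      filter_modEq_eq_singleton hsdist (mem_univ j) hj, prod_singleton, prod_singleton,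
      show n - s j = (r i - s j) + (n - r i) by ring, Int.gcd_add_self_right]
  · have hempty : (∀ i, ¬ r i ≡ n [ZMOD p]) ∨ ∀ j, ¬ s j ≡ n [ZMOD p] := by
      by_contra! h
      obtain ⟨⟨i, hi⟩, ⟨j, hj⟩⟩ := h
      exact hne ⟨i, j, hi.symm, hj.symm⟩
    rcases hempty with hr | hs
    · rw [hAB, filter_false_of_mem fun i _ => hr i]
      simp
    · rw [hAB, filter_false_of_mem fun j _ => hs j]
      simp
end

section
/- Let A, B ∈ ℤ[x] be monic, coprime in ℚ[x], and both split with simple roots modulo a prime p. Let δ be the smallest positive integer in the ideal generated by A and B in ℤ[x]. Then ν_p(δ) equals the largest integer μ for which there exists n ∈ ℤ with A(n) ≡ 0 (mod p^μ) and B(n) ≡ 0 (mod p^μ). -/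
open Polynomial

/-!
If `p ^ μ` divides both `A n` and `B n`, it divides `δ = A n * U n + B n * V n`.

Conversely, Hensel's lemma lifts the simple roots of `A` modulo `p` to roots `zᵢ ∈ ℤ_p` of `A`
with distinct residues. Write `δ = A U + B V` with `deg V < deg A` and let `k = ν_p(δ) ≥ 1`. If no
`B zᵢ` were divisible by `p ^ k`, then `B zᵢ * V zᵢ = δ` would force `p ∣ V zᵢ` for all `i`, so `V`
would vanish modulo `p` at `deg A` distinct points, hence `V ≡ 0`; then `A U ≡ 0` with `A` monic
gives `U ≡ 0`, and `δ / p` would be a smaller positive element of the ideal `(A, B) ∩ ℤ`. So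
`p ^ k ∣ B zᵢ` for some `i`, and any integer `n ≡ zᵢ (mod p ^ k)` is a common root modulo `p ^ k`.
-/

namespace PadicInt

variable {p : ℕ} [Fact p.Prime]

theorem toZMod_eq_zero_iff_not_isUnit {x : ℤ_[p]} : toZMod x = 0 ↔ ¬IsUnit x := by
  rw [← RingHom.mem_ker, ker_toZMod, IsLocalRing.mem_maximalIdeal, mem_nonunits_iff]

theorem toZMod_aeval (F : ℤ[X]) (z : ℤ_[p]) :
    toZMod (aeval z F) = (F.map (Int.castRingHom (ZMod p))).eval (toZMod z) := by
  rw [eval_map, aeval_def, hom_eval₂]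
  congr 1
  exact RingHom.ext_int _ _

theorem exists_aeval_eq_zero_toZMod_eq {F : ℤ[X]} {a : ZMod p}
    (hroot : (F.map (Int.castRingHom (ZMod p))).IsRoot a)
    (hsimple : (F.map (Int.castRingHom (ZMod p))).derivative.eval a ≠ 0) :
    ∃ z : ℤ_[p], aeval z F = 0 ∧ toZMod z = a := by
  obtain ⟨a₀, rfl⟩ : ∃ a₀ : ℤ_[p], toZMod a₀ = a := ⟨a.val, by simp⟩
  have hderiv : ‖aeval a₀ (derivative F)‖ = 1 := by
    rw [← isUnit_iff, ← not_not (a := IsUnit _), ← toZMod_eq_zero_iff_not_isUnit, toZMod_aeval,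
      ← derivative_map]
    exact hsimple
  have hnorm : ‖aeval a₀ F‖ < ‖aeval a₀ (derivative F)‖ ^ 2 := by
    rw [hderiv, one_pow, ← not_isUnit_iff, ← toZMod_eq_zero_iff_not_isUnit, toZMod_aeval]
    exact hroot
  obtain ⟨z, hz, hza, -⟩ := hensels_lemma hnorm
  rw [hderiv, ← not_isUnit_iff, ← toZMod_eq_zero_iff_not_isUnit, map_sub, sub_eq_zero] at hza
  exact ⟨z, hz, hza⟩

theorem exists_roots_of_map_eq_prod_X_sub_C {F : ℤ[X]} {ι : Type*} [Fintype ι] {r : ι → ZMod p}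
    (hr : Function.Injective r) (hF : F.map (Int.castRingHom (ZMod p)) = ∏ i, (X - C (r i))) :
    ∃ z : ι → ℤ_[p], (∀ i, aeval (z i) F = 0) ∧ toZMod ∘ z = r := by
  have hsep : (F.map (Int.castRingHom (ZMod p))).Separable :=
    hF ▸ separable_prod_X_sub_C_iff.mpr hr
  have hroot (i : ι) : (F.map (Int.castRingHom (ZMod p))).IsRoot (r i) := by
    rw [hF, IsRoot, eval_prod]
    exact Finset.prod_eq_zero (Finset.mem_univ i) (by simp)
  choose z hz hzr using fun i =>
    exists_aeval_eq_zero_toZMod_eq (hroot i) (hsep.eval₂_derivative_ne_zero _ (hroot i))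
  exact ⟨z, hz, funext hzr⟩

theorem pow_dvd_eval_appr {F : ℤ[X]} {z : ℤ_[p]} {k : ℕ} (h : (p : ℤ_[p]) ^ k ∣ aeval z F) :
    (p : ℤ) ^ k ∣ F.eval (z.appr k : ℤ) := by
  have happr : (p : ℤ_[p]) ^ k ∣ z - (z.appr k : ℤ) := by
    simpa [← Ideal.mem_span_singleton] using appr_spec k z
  have hcast (n : ℤ) : ((F.eval n : ℤ) : ℤ_[p]) = aeval (n : ℤ_[p]) F := by
    simpa using (aeval_algebraMap_apply_eq_algebraMap_eval (A := ℤ_[p]) n F).symm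
  rw [← pow_p_dvd_int_iff, hcast, ← sub_sub_cancel (aeval z F) (aeval _ F)]
  refine dvd_sub h (happr.trans ?_)
  simpa only [aeval_def, eval_map_algebraMap] using
    sub_dvd_eval_sub z _ (F.map (algebraMap ℤ ℤ_[p]))

end PadicInt

namespace Polynomial

theorem C_dvd_iff_map_intCast_eq_zero (p : ℕ) (F : ℤ[X]) :
    C (p : ℤ) ∣ F ↔ F.map (Int.castRingHom (ZMod p)) = 0 := by
  rw [C_dvd_iff_dvd_coeff]
  simp only [Polynomial.ext_iff, coeff_map, coeff_zero, eq_intCast,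
    ZMod.intCast_zmod_eq_zero_iff_dvd]

theorem dvd_of_dvd_eval_of_add_mul_eq_C {R : Type*} [CommRing R] {A B U V : R[X]} {m d n : R}
    (h : A * U + B * V = C m) (hA : d ∣ A.eval n) (hB : d ∣ B.eval n) : d ∣ m := by
  have := congrArg (eval n) h
  simp only [eval_add, eval_mul, eval_C] at this
  exact this ▸ dvd_add (hA.mul_right _) (hB.mul_right _)

theorem exists_add_mul_eq_C_of_map_eq_zero {p : ℕ} [Fact p.Prime] {A B U V : ℤ[X]} {m : ℤ}
    (hA : A.Monic) (h : A * U + B * V = C (p * m))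
    (hV : V.map (Int.castRingHom (ZMod p)) = 0) : ∃ U' V' : ℤ[X], A * U' + B * V' = C m := by
  have hU : U.map (Int.castRingHom (ZMod p)) = 0 := by
    have := congrArg (map (Int.castRingHom (ZMod p))) h
    simp only [Polynomial.map_add, Polynomial.map_mul, hV, mul_zero, add_zero, eq_intCast,
      Int.cast_mul, Int.cast_natCast, Polynomial.map_natCast, CharP.cast_eq_zero, zero_mul,
      mul_eq_zero] at this
    exact this.resolve_left (hA.map _).ne_zero
  obtain ⟨U', rfl⟩ := (C_dvd_iff_map_intCast_eq_zero p U).mpr hU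
  obtain ⟨V', rfl⟩ := (C_dvd_iff_map_intCast_eq_zero p V).mpr hV
  have hp : C (p : ℤ) ≠ 0 := C_ne_zero.mpr (Nat.cast_ne_zero.mpr (Fact.out : p.Prime).ne_zero)
  refine ⟨U', V', mul_left_cancel₀ hp ?_⟩
  rw [C_mul] at h
  linear_combination h

end Polynomial

open PadicInt in
theorem exists_pow_dvd_aeval_of_isLeast {p : ℕ} [Fact p.Prime] {A B : ℤ[X]} (hA : A.Monic)
    {z : Fin A.natDegree → ℤ_[p]} (hz : ∀ i, aeval (z i) A = 0)
    (hzinj : Function.Injective (toZMod ∘ z)) {δ : ℤ}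
    (hδ : IsLeast {m : ℤ | 0 < m ∧ ∃ U V : ℤ[X], A * U + B * V = C m} δ) {k : ℕ} (hk : k ≠ 0)
    (hkδ : (p : ℤ) ^ k ∣ δ) : ∃ i, (p : ℤ_[p]) ^ k ∣ aeval (z i) B := by
  by_contra! hB
  obtain ⟨⟨hδpos, U, V, hUV⟩, hleast⟩ := hδ
  obtain ⟨m, rfl⟩ : (p : ℤ) ∣ δ := (dvd_pow_self _ hk).trans hkδ
  have hUV' : A * (U + B * (V /ₘ A)) + B * (V %ₘ A) = C (p * m) := by
    linear_combination hUV + B * modByMonic_add_div V A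
  have hroot (i : Fin A.natDegree) : toZMod (aeval (z i) (V %ₘ A)) = 0 := by
    rw [toZMod_eq_zero_iff_not_isUnit]
    intro hunit
    apply hB i
    have hev := congrArg (aeval (z i)) hUV'
    rw [map_add, map_mul, map_mul, hz i, zero_mul, zero_add, aeval_C] at hev
    rw [← hunit.dvd_mul_right, hev]
    simpa using _root_.map_dvd (algebraMap ℤ ℤ_[p]) hkδ
  have hVmod : (V %ₘ A).map (Int.castRingHom (ZMod p)) = 0 := by
    refine eq_zero_of_degree_lt_of_eval_index_eq_zero (s := Finset.univ) hzinj.injOn ?_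
      fun i _ => ?_
    · calc _ ≤ (V %ₘ A).degree := degree_map_le
        _ < A.degree := degree_modByMonic_lt V hA
        _ = _ := by simp [degree_eq_natDegree hA.ne_zero]
    · rw [Function.comp_apply, ← toZMod_aeval]
      exact hroot i
  obtain ⟨U', V', h'⟩ := Polynomial.exists_add_mul_eq_C_of_map_eq_zero hA hUV' hVmod
  have hp : (2 : ℤ) ≤ p := by exact_mod_cast (Fact.out : p.Prime).two_le
  have hm : 0 < m := pos_of_mul_pos_right hδpos (by omega)
  have := hleast ⟨hm, U', V', h'⟩
  nlinarith

theorem valuation_delta_eq_greatest_common_root_depth_general (A B : Polynomial ℤ)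
    (hA : A.Monic)
    (p : ℕ) (hp : p.Prime)
    (hAsplit : ∃ r : Fin A.natDegree → ZMod p, Function.Injective r ∧
      A.map (Int.castRingHom (ZMod p)) = ∏ i, (Polynomial.X - Polynomial.C (r i)))
    (δ : ℤ)
    (hδ : IsLeast {m : ℤ | 0 < m ∧ ∃ U V : Polynomial ℤ, A * U + B * V = Polynomial.C m} δ) :
    IsGreatest {μ : ℕ | ∃ n : ℤ, ((p : ℤ) ^ μ) ∣ A.eval n ∧ ((p : ℤ) ^ μ) ∣ B.eval n}
      (padicValInt p δ) := by
  have : Fact p.Prime := ⟨hp⟩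
  obtain ⟨r, hr, hAr⟩ := hAsplit
  obtain ⟨z, hzA, hzr⟩ := PadicInt.exists_roots_of_map_eq_prod_X_sub_C hr hAr
  refine ⟨?_, fun μ ⟨n, hAn, hBn⟩ => ?_⟩
  · rcases eq_or_ne (padicValInt p δ) 0 with hk | hk
    · exact ⟨0, by simp [hk]⟩
    obtain ⟨i, hi⟩ :=
      exists_pow_dvd_aeval_of_isLeast hA hzA (hzr ▸ hr) hδ hk (padicValInt_dvd δ)
    exact ⟨_, PadicInt.pow_dvd_eval_appr (by simp [hzA i]), PadicInt.pow_dvd_eval_appr hi⟩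
  · obtain ⟨hδpos, U, V, hUV⟩ := hδ.1
    exact ((padicValInt_dvd_iff μ δ).mp
      (dvd_of_dvd_eval_of_add_mul_eq_C hUV hAn hBn)).resolve_left hδpos.ne'

theorem valuation_delta_eq_greatest_common_root_depth (A B : Polynomial ℤ)
    (hA : A.Monic) (hB : B.Monic)
    (hcop : IsCoprime (A.map (Int.castRingHom ℚ)) (B.map (Int.castRingHom ℚ)))
    (p : ℕ) (hp : p.Prime)
    (hAsplit : ∃ r : Fin A.natDegree → ZMod p, Function.Injective r ∧
      A.map (Int.castRingHom (ZMod p)) = ∏ i, (Polynomial.X - Polynomial.C (r i)))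
    (hBsplit : ∃ s : Fin B.natDegree → ZMod p, Function.Injective s ∧
      B.map (Int.castRingHom (ZMod p)) = ∏ j, (Polynomial.X - Polynomial.C (s j)))
    (δ : ℤ)
    (hδ : IsLeast {m : ℤ | 0 < m ∧ ∃ U V : Polynomial ℤ, A * U + B * V = Polynomial.C m} δ) :
    IsGreatest {μ : ℕ | ∃ n : ℤ, ((p : ℤ) ^ μ) ∣ A.eval n ∧ ((p : ℤ) ^ μ) ∣ B.eval n}
      (padicValInt p δ) :=
  valuation_delta_eq_greatest_common_root_depth_general A B hA p hp hAsplit δ hδ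
end

section
/- Let a and b be coprime positive integers with a or b even. Then x^a + 1 and x^b + 1 are coprime in ℚ[x], and 2 belongs to the ideal generated by x^a + 1 and x^b + 1 in ℤ[x]; consequently, for every integer n, gcd(n^a + 1, n^b + 1) ∈ {1, 2}. -/
open Polynomial

/-!
Modulo `I = (X ^ a + 1, X ^ b + 1)` the class `x` of `X` satisfies `x ^ a = x ^ b = -1`, hence
`x ^ (2 * a) = x ^ (2 * b) = 1` and so `x ^ 2 = x ^ (2 * gcd a b) = 1`. If, say, `a` is even this gives
`-1 = x ^ a = 1`, i.e. `2 ∈ I`. A Bézout relation `u * (X ^ a + 1) + v * (X ^ b + 1) = 2` then shows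
coprimality over `ℚ`, where `2` is a unit, and evaluating it at `n` shows that the gcd divides `2`.
-/

theorem two_eq_zero_of_pow_eq_neg_one {R : Type*} [Ring R] {x : R} {a b : ℕ}
    (hab : a.Coprime b) (heven : Even a ∨ Even b) (ha : x ^ a = -1) (hb : x ^ b = -1) :
    (2 : R) = 0 := by
  have hsq : x ^ 2 = 1 := by
    have h2a : x ^ (2 * a) = 1 := by rw [pow_mul', ha, neg_one_sq]
    have h2b : x ^ (2 * b) = 1 := by rw [pow_mul', hb, neg_one_sq]
    simpa [Nat.gcd_mul_left, hab] using pow_gcd_eq_one.mpr ⟨h2a, h2b⟩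
  have hneg : (-1 : R) = 1 := by
    rcases heven with ⟨c, rfl⟩ | ⟨c, rfl⟩
    · rw [← ha, ← two_mul, pow_mul, hsq, one_pow]
    · rw [← hb, ← two_mul, pow_mul, hsq, one_pow]
  calc (2 : R) = 1 - -1 := by norm_num
    _ = 0 := by rw [hneg, sub_self]

theorem two_mem_span_X_pow_add_one {R : Type*} [CommRing R] {a b : ℕ}
    (hab : a.Coprime b) (heven : Even a ∨ Even b) :
    (2 : R[X]) ∈ Ideal.span {X ^ a + 1, X ^ b + 1} := by
  set I := Ideal.span {(X : R[X]) ^ a + 1, X ^ b + 1}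
  have hroot {k : ℕ} (hk : (X : R[X]) ^ k + 1 ∈ I) : Ideal.Quotient.mk I X ^ k = -1 := by
    rw [← Ideal.Quotient.eq_zero_iff_mem, map_add, map_pow, map_one] at hk
    exact eq_neg_of_add_eq_zero_left hk
  rw [← Ideal.Quotient.eq_zero_iff_mem, map_ofNat]
  exact two_eq_zero_of_pow_eq_neg_one hab heven
    (hroot (Ideal.subset_span (by simp))) (hroot (Ideal.subset_span (by simp)))

theorem Ideal.map_mem_span_pair {R S : Type*} [CommSemiring R] [CommSemiring S] (f : R →+* S)
    {c x y : R} (h : c ∈ Ideal.span {x, y}) : f c ∈ Ideal.span {f x, f y} := by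
  simpa [Ideal.map_span, Set.image_pair] using Ideal.mem_map_of_mem f h

theorem IsCoprime.of_isUnit_mem_span_pair {R : Type*} [CommSemiring R] {c x y : R}
    (h : c ∈ Ideal.span {x, y}) (hc : IsUnit c) : IsCoprime x y := by
  rw [← Ideal.sup_eq_top_iff_isCoprime, ← Ideal.span_insert]
  exact Ideal.eq_top_of_isUnit_mem _ h hc

theorem Int.gcd_dvd_of_mem_span_pair {c x y : ℤ} (h : c ∈ Ideal.span {x, y}) :
    (Int.gcd x y : ℤ) ∣ c := by
  rwa [Int.coe_gcd, ← Ideal.mem_span_singleton, _root_.span_gcd]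

theorem coprime_even_case_general (a b : ℕ)
    (hab : Nat.Coprime a b) (heven : Even a ∨ Even b) :
    IsCoprime (Polynomial.X ^ a + 1 : Polynomial ℚ) (Polynomial.X ^ b + 1) ∧
    (2 : Polynomial ℤ) ∈ Ideal.span {(Polynomial.X ^ a + 1 : Polynomial ℤ),
      Polynomial.X ^ b + 1} ∧
    ∀ n : ℤ, Int.gcd (n ^ a + 1) (n ^ b + 1) = 1 ∨ Int.gcd (n ^ a + 1) (n ^ b + 1) = 2 := by
  have h2 : (2 : ℤ[X]) ∈ Ideal.span {X ^ a + 1, X ^ b + 1} := two_mem_span_X_pow_add_one hab heven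
  refine ⟨?_, h2, fun n => ?_⟩
  · have h2ℚ := Ideal.map_mem_span_pair (mapRingHom (Int.castRingHom ℚ)) h2
    simp only [map_ofNat, map_add, map_pow, map_one, coe_mapRingHom, map_X] at h2ℚ
    exact .of_isUnit_mem_span_pair h2ℚ (isUnit_C.mpr (by norm_num) : IsUnit (C (2 : ℚ)))
  · have h2n := Int.gcd_dvd_of_mem_span_pair (Ideal.map_mem_span_pair (evalRingHom n) h2)
    simp only [map_ofNat, map_add, map_pow, map_one, coe_evalRingHom, eval_X] at h2n
    exact (Nat.dvd_prime Nat.prime_two).mp (by exact_mod_cast h2n)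

theorem coprime_even_case (a b : ℕ) (ha : 0 < a) (hb : 0 < b)
    (hab : Nat.Coprime a b) (heven : Even a ∨ Even b) :
    IsCoprime (Polynomial.X ^ a + 1 : Polynomial ℚ) (Polynomial.X ^ b + 1) ∧
    (2 : Polynomial ℤ) ∈ Ideal.span {(Polynomial.X ^ a + 1 : Polynomial ℤ),
      Polynomial.X ^ b + 1} ∧
    ∀ n : ℤ, Int.gcd (n ^ a + 1) (n ^ b + 1) = 1 ∨ Int.gcd (n ^ a + 1) (n ^ b + 1) = 2 :=
  coprime_even_case_general a b hab heven
end
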